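/- Let k ≥ 1 and let B_k denote the Boolean lattice of all subsets of a k-element set (equivalently, the product of chains [1]^k). Then the codensity of the lattice of transfer systems on B_k satisfies ρ(Tr(B_k)) = (6^k − 5^k)/(3^k − 2^k)². Consequently, ρ(Tr(B_k)) tends to 0 as k tends to infinity. -/

import Mathlib

/-- A transfer system on a finite lattice `L` (with trivial group action): a partial order
refining `≤` which is closed under restriction. -/
structure TransferSystem (L : Type*) [Lattice L] : Type _ where
  rel : L → L → Prop
  refl : ∀ x, rel x x
  trans : ∀ {x y z}, rel x y → rel y z → rel x z
  le_of_rel : ∀ {x y}, rel x y → x ≤ y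
  restrict : ∀ {x y x'}, rel x y → x' ≤ y → rel (x ⊓ x') x'

namespace TransferSystem

variable {L : Type*} [Lattice L]

theorem ext' {S T : TransferSystem L} (h : S.rel = T.rel) : S = T := by
  cases S; cases T; simpa using h

instance : PartialOrder (TransferSystem L) where
  le S T := ∀ ⦃x y : L⦄, S.rel x y → T.rel x y
  le_refl S := fun _ _ h => h
  le_trans S T U h1 h2 := fun _ _ h => h2 (h1 h)
  le_antisymm S T h1 h2 :=
    ext' (by funext x y; exact propext ⟨fun h => h1 h, fun h => h2 h⟩)

/-- The intersection of a set of transfer systems. -/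
def sInfTS (s : Set (TransferSystem L)) : TransferSystem L where
  rel x y := x ≤ y ∧ ∀ T ∈ s, T.rel x y
  refl x := ⟨le_refl x, fun T _ => T.refl x⟩
  trans h1 h2 := ⟨h1.1.trans h2.1, fun T hT => T.trans (h1.2 T hT) (h2.2 T hT)⟩
  le_of_rel h := h.1
  restrict h hle := ⟨inf_le_right, fun T hT => T.restrict (h.2 T hT) hle⟩

instance : InfSet (TransferSystem L) := ⟨sInfTS⟩

theorem sInf_rel (s : Set (TransferSystem L)) (x y : L) :
    (sInf s).rel x y ↔ x ≤ y ∧ ∀ T ∈ s, T.rel x y := Iff.rfl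

/-- The complete lattice of transfer systems, ordered by refinement. -/
instance : CompleteLattice (TransferSystem L) :=
  completeLatticeOfInf _ (fun s =>
    ⟨fun T hT _ _ h => h.2 T hT,
     fun T hT _ _ h => ((sInf_rel s _ _).2 ⟨T.le_of_rel h, fun S hS => hT hS h⟩)⟩)

end TransferSystem

/-- The codensity `ρ` of (the reduced formal context of) a finite lattice `α`:
the number of pairs `(A, B)` with `A` join-irreducible, `B` meet-irreducible and `A ≰ B`,
divided by the product of the numbers of join-irreducibles and meet-irreducibles. -/
noncomputable def codensity (α : Type*) [Lattice α] : ℚ :=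
  (Nat.card {p : α × α // SupIrred p.1 ∧ InfIrred p.2 ∧ ¬ p.1 ≤ p.2} : ℚ) /
    ((Nat.card {a : α // SupIrred a} : ℚ) * (Nat.card {a : α // InfIrred a} : ℚ))

/-!
A transfer system on a finite lattice `L` is the join of the systems `arrow x y` generated by its
arrows `x → y`, `x < y`, and the meet of the systems `coarrow x y` containing it. These are the
irreducibles: every system strictly below `arrow x y` lies below `coarrow x y`, while every system
strictly above `coarrow x y` contains `x → y`, which `coarrow x y` lacks. So both kinds of
irreducibles are indexed by the pairs `x < y`, and `arrow a b ≰ coarrow x y` exactly when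
`x ≤ a`, `y ≤ b` and `y ≰ a`. For `L = B_k` these conditions are coordinatewise, so every count is
a `k`-th power of a count in `B_1`: there are `3^k - 2^k` pairs `x < y`, and `6^k - 5^k`
configurations `x ≤ a ≤ b`, `x ≤ y ≤ b`, `y ≰ a` (the up-sets of a square minus those of a
four-element chain). Dividing by `9^k` gives the limit.
-/

theorem supIrred_of_forall_lt_le {α : Type*} [Lattice α] {a c : α} (hac : ¬ a ≤ c)
    (h : ∀ b < a, b ≤ c) : SupIrred a := by
  refine ⟨fun hmin => hac ((hmin inf_le_left).trans inf_le_right), fun b d hbd => ?_⟩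
  by_contra! hne
  have hb : b < a := (hbd ▸ le_sup_left).lt_of_ne hne.1
  have hd : d < a := (hbd ▸ le_sup_right).lt_of_ne hne.2
  exact hac (hbd ▸ sup_le (h b hb) (h d hd))

theorem infIrred_of_forall_gt_ge {α : Type*} [Lattice α] {a c : α} (hca : ¬ c ≤ a)
    (h : ∀ b, a < b → c ≤ b) : InfIrred a :=
  supIrred_toDual.1 <| supIrred_of_forall_lt_le (a := OrderDual.toDual a) (c := OrderDual.toDual c)
    hca fun b hb => h (OrderDual.ofDual b) hb

theorem codensity_eq_of_equiv {α ι κ : Type*} [Lattice α] (f : ι ≃ {a : α // SupIrred a})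
    (g : κ ≃ {a : α // InfIrred a}) :
    codensity α = Nat.card {p : ι × κ // ¬ (f p.1 : α) ≤ g p.2} / (Nat.card ι * Nat.card κ) := by
  rw [codensity, Nat.card_congr f, Nat.card_congr g]
  congr 2
  exact Nat.card_congr
    { toFun := fun p => ⟨(f.symm ⟨p.1.1, p.2.1⟩, g.symm ⟨p.1.2, p.2.2.1⟩), by simpa using p.2.2.2⟩
      invFun := fun p => ⟨(f p.1.1, g p.1.2), (f p.1.1).2, (g p.1.2).2, p.2⟩
      left_inv := fun p => by simp
      right_inv := fun p => by simp }

namespace TransferSystem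

variable {L : Type*} [Lattice L]

theorem rel_of_le_of_le (T : TransferSystem L) {a b c : L} (h : T.rel a b) (hac : a ≤ c)
    (hcb : c ≤ b) : T.rel a c := by
  simpa [inf_eq_left.2 hac] using T.restrict h hcb

/-- The transfer system generated by the single arrow `x → y`. -/
def arrow (x y : L) : TransferSystem L where
  rel a b := a = b ∨ (b ≤ y ∧ a = b ⊓ x)
  refl a := Or.inl rfl
  trans := by
    rintro a b c (rfl | ⟨hb, rfl⟩) (rfl | ⟨hc, rfl⟩)
    · exact Or.inl rfl
    · exact Or.inr ⟨hc, rfl⟩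
    · exact Or.inr ⟨hb, rfl⟩
    · exact Or.inr ⟨hc, by rw [inf_assoc, inf_idem]⟩
  le_of_rel := by
    rintro a b (rfl | ⟨-, rfl⟩)
    exacts [le_rfl, inf_le_left]
  restrict := by
    rintro a b b' (rfl | ⟨hb, rfl⟩) hb'
    · exact Or.inl (inf_eq_right.2 hb')
    · exact Or.inr ⟨hb'.trans hb, by rw [inf_right_comm, inf_eq_right.2 hb']⟩

def coarrow (x y : L) : TransferSystem L where
  rel a b := a ≤ b ∧ (x ≤ a → y ≤ b → y ≤ a)
  refl a := ⟨le_rfl, fun _ hy => hy⟩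
  trans := by
    rintro a b c ⟨hab, hi1⟩ ⟨hbc, hi2⟩
    exact ⟨hab.trans hbc, fun hx hy => hi1 hx (hi2 (hx.trans hab) hy)⟩
  le_of_rel h := h.1
  restrict := by
    rintro a b b' ⟨-, hi⟩ hb'
    exact ⟨inf_le_right, fun hx hy => le_inf (hi (hx.trans inf_le_left) (hy.trans hb')) hy⟩

variable {x y a b : L} {S T : TransferSystem L}

theorem arrow_rel_self (h : x ≤ y) : (arrow x y).rel x y :=
  Or.inr ⟨le_rfl, (inf_eq_right.2 h).symm⟩

theorem arrow_le_iff (h : x ≤ y) : arrow x y ≤ T ↔ T.rel x y := by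
  refine ⟨fun hle => hle (arrow_rel_self h), fun hT => ?_⟩
  rintro a b (rfl | ⟨hb, rfl⟩)
  · exact T.refl a
  · simpa [inf_comm] using T.restrict hT hb

theorem not_coarrow_rel_iff (hab : a ≤ b) :
    ¬ (coarrow x y).rel a b ↔ x ≤ a ∧ y ≤ b ∧ ¬ y ≤ a := by
  simp [coarrow, hab]

theorem not_arrow_le_coarrow_iff (hab : a ≤ b) :
    ¬ arrow a b ≤ coarrow x y ↔ x ≤ a ∧ y ≤ b ∧ ¬ y ≤ a :=
  (not_congr (arrow_le_iff hab)).trans (not_coarrow_rel_iff hab)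

theorem not_arrow_le_coarrow (h : x < y) : ¬ arrow x y ≤ coarrow x y :=
  (not_arrow_le_coarrow_iff h.le).2 ⟨le_rfl, le_rfl, h.not_ge⟩

theorem le_coarrow_of_le_arrow (hS : S ≤ arrow x y) (hxy : ¬ S.rel x y) : S ≤ coarrow x y := by
  intro u v huv
  refine ⟨S.le_of_rel huv, fun hxu hyv => ?_⟩
  rcases hS huv with rfl | ⟨hvy, rfl⟩
  · exact hyv
  · obtain rfl : v = y := le_antisymm hvy hyv
    rw [le_antisymm inf_le_right hxu] at huv
    exact absurd huv hxy

theorem arrow_le_of_coarrow_lt (hxy : x ≤ y) (hS : coarrow x y < S) : arrow x y ≤ S := by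
  obtain ⟨u, v, huv, hnot⟩ : ∃ u v, S.rel u v ∧ ¬ (coarrow x y).rel u v := by
    by_contra! h
    exact hS.not_ge fun u v => h u v
  obtain ⟨hxu, hyv, hyu⟩ := (not_coarrow_rel_iff (S.le_of_rel huv)).1 hnot
  have hx : (coarrow x y).rel x (u ⊓ y) :=
    ⟨le_inf hxu hxy, fun _ hy => absurd (hy.trans inf_le_left) hyu⟩
  exact (arrow_le_iff hxy).2 (S.trans (hS.le hx) (S.restrict huv hyv))

theorem supIrred_arrow (h : x < y) : SupIrred (arrow x y) :=
  supIrred_of_forall_lt_le (not_arrow_le_coarrow h) fun _ hS =>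
    le_coarrow_of_le_arrow hS.le fun hxy => hS.not_ge ((arrow_le_iff h.le).2 hxy)

theorem infIrred_coarrow (h : x < y) : InfIrred (coarrow x y) :=
  infIrred_of_forall_gt_ge (not_arrow_le_coarrow h) fun _ => arrow_le_of_coarrow_lt h.le

theorem arrow_injective {x' y' : L} (h : x < y) (h' : x' < y') (he : arrow x y = arrow x' y') :
    x = x' ∧ y = y' := by
  have h₁ : (arrow x' y').rel x y := he ▸ arrow_rel_self h.le
  have h₂ : (arrow x y).rel x' y' := he ▸ arrow_rel_self h'.le
  rcases h₁ with rfl | ⟨hy, hx⟩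
  · exact absurd rfl h.ne
  rcases h₂ with rfl | ⟨hy', hx'⟩
  · exact absurd rfl h'.ne
  obtain rfl : y = y' := le_antisymm hy hy'
  exact ⟨by rw [hx, hx', ← inf_assoc, inf_idem], rfl⟩

theorem coarrow_injective {x' y' : L} (h : x < y) (h' : x' < y')
    (he : coarrow x y = coarrow x' y') : x = x' ∧ y = y' := by
  have h₁ : ¬ (coarrow x y).rel x' y' := he ▸ fun hr => not_arrow_le_coarrow h'
    ((arrow_le_iff h'.le).2 hr)
  have h₂ : ¬ (coarrow x' y').rel x y := he ▸ fun hr => not_arrow_le_coarrow h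
    ((arrow_le_iff h.le).2 hr)
  obtain ⟨hxx, hyy, -⟩ := (not_coarrow_rel_iff h'.le).1 h₁
  obtain ⟨hxx', hyy', -⟩ := (not_coarrow_rel_iff h.le).1 h₂
  exact ⟨le_antisymm hxx hxx', le_antisymm hyy hyy'⟩

theorem exists_eq_arrow_of_supIrred [Finite L] (hT : SupIrred T) :
    ∃ x y, x < y ∧ arrow x y = T := by
  have := Fintype.ofFinite L
  classical
  let s := Finset.univ.filter fun p : L × L => p.1 < p.2 ∧ T.rel p.1 p.2
  have hsup : s.sup (fun p => arrow p.1 p.2) = T := by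
    refine le_antisymm (Finset.sup_le fun p hp => ?_) fun u v huv => ?_
    · obtain ⟨hlt, hrel⟩ := (Finset.mem_filter.1 hp).2
      exact (arrow_le_iff hlt.le).2 hrel
    · rcases (T.le_of_rel huv).eq_or_lt with rfl | hlt
      · exact TransferSystem.refl _ u
      · exact Finset.le_sup (f := fun p : L × L => arrow p.1 p.2)
          (Finset.mem_filter.2 ⟨Finset.mem_univ (u, v), hlt, huv⟩) (arrow_rel_self hlt.le)
  obtain ⟨p, hp, hpT⟩ := hT.finset_sup_eq hsup
  exact ⟨p.1, p.2, (Finset.mem_filter.1 hp).2.1, hpT⟩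

theorem exists_le_coarrow_of_not_rel [WellFoundedLT L] (T : TransferSystem L) (hab : a ≤ b)
    (hT : ¬ T.rel a b) : ∃ x y, x < y ∧ T ≤ coarrow x y ∧ ¬ (coarrow x y).rel a b := by
  induction b using WellFoundedLT.induction with
  | _ b ih =>
  by_cases hc : ∃ c, a ≤ c ∧ c < b ∧ T.rel c b
  · obtain ⟨c, hac, hcb, hcT⟩ := hc
    obtain ⟨x, y, hxy, hTle, hnot⟩ := ih c hcb hac fun h => hT (T.trans h hcT)
    exact ⟨x, y, hxy, hTle, fun h => hnot ((coarrow x y).rel_of_le_of_le h hac hcb.le)⟩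
  · push Not at hc
    have hab' : a < b := hab.lt_of_ne fun h => hT (h ▸ T.refl a)
    refine ⟨a, b, hab', fun u v huv => ⟨T.le_of_rel huv, fun hau hbv => ?_⟩,
      (not_coarrow_rel_iff hab).2 ⟨le_rfl, le_rfl, hab'.not_ge⟩⟩
    by_contra hbu
    exact hc (u ⊓ b) (le_inf hau hab) (inf_le_right.lt_of_ne fun h => hbu (h ▸ inf_le_left))
      (T.restrict huv hbv)

theorem exists_eq_coarrow_of_infIrred [Finite L] (hT : InfIrred T) :
    ∃ x y, x < y ∧ coarrow x y = T := by
  have := Fintype.ofFinite L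
  classical
  let s := Finset.univ.filter fun p : L × L => p.1 < p.2 ∧ T ≤ coarrow p.1 p.2
  have hinf : s.inf (fun p => coarrow p.1 p.2) = T := by
    refine le_antisymm (fun u v huv => ?_) (Finset.le_inf fun p hp => (Finset.mem_filter.1 hp).2.2)
    by_contra hTuv
    obtain ⟨x, y, hxy, hTle, hnot⟩ :=
      T.exists_le_coarrow_of_not_rel (le_of_rel _ huv) hTuv
    exact hnot (Finset.inf_le (f := fun p : L × L => coarrow p.1 p.2)
      (Finset.mem_filter.2 ⟨Finset.mem_univ (x, y), hxy, hTle⟩) huv)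
  obtain ⟨p, hp, hpT⟩ := hT.finset_inf_eq hinf
  exact ⟨p.1, p.2, (Finset.mem_filter.1 hp).2.1, hpT⟩

variable (L) in
noncomputable def supIrredEquiv [Finite L] :
    {p : L × L // p.1 < p.2} ≃ {T : TransferSystem L // SupIrred T} :=
  Equiv.ofBijective (fun p => ⟨arrow p.1.1 p.1.2, supIrred_arrow p.2⟩)
    ⟨fun p q he => Subtype.ext <| Prod.ext_iff.2 <|
      arrow_injective p.2 q.2 (congrArg Subtype.val he),
     fun T => by
      obtain ⟨x, y, hxy, hT⟩ := exists_eq_arrow_of_supIrred T.2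
      exact ⟨⟨(x, y), hxy⟩, Subtype.ext hT⟩⟩

variable (L) in
noncomputable def infIrredEquiv [Finite L] :
    {p : L × L // p.1 < p.2} ≃ {T : TransferSystem L // InfIrred T} :=
  Equiv.ofBijective (fun p => ⟨coarrow p.1.1 p.1.2, infIrred_coarrow p.2⟩)
    ⟨fun p q he => Subtype.ext <| Prod.ext_iff.2 <|
      coarrow_injective p.2 q.2 (congrArg Subtype.val he),
     fun T => by
      obtain ⟨x, y, hxy, hT⟩ := exists_eq_coarrow_of_infIrred T.2
      exact ⟨⟨(x, y), hxy⟩, Subtype.ext hT⟩⟩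

theorem lt_and_not_arrow_le_coarrow_iff :
    (a < b ∧ x < y) ∧ ¬ arrow a b ≤ coarrow x y ↔
      (x ≤ a ∧ a ≤ b ∧ x ≤ y ∧ y ≤ b) ∧ ¬ y ≤ a := by
  constructor
  · rintro ⟨⟨hab, hxy⟩, h⟩
    obtain ⟨hxa, hyb, hya⟩ := (not_arrow_le_coarrow_iff hab.le).1 h
    exact ⟨⟨hxa, hab.le, hxy.le, hyb⟩, hya⟩
  · rintro ⟨⟨hxa, hab, hxy, hyb⟩, hya⟩
    refine ⟨⟨hab.lt_of_ne ?_, hxy.lt_of_ne ?_⟩, (not_arrow_le_coarrow_iff hab).2 ⟨hxa, hyb, hya⟩⟩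
    exacts [fun h => hya (h ▸ hyb), fun h => hya (h ▸ hxa)]

theorem codensity_eq [Finite L] :
    codensity (TransferSystem L) =
      Nat.card {q : (L × L) × (L × L) //
        (q.2.1 ≤ q.1.1 ∧ q.1.1 ≤ q.1.2 ∧ q.2.1 ≤ q.2.2 ∧ q.2.2 ≤ q.1.2) ∧ ¬ q.2.2 ≤ q.1.1} /
      Nat.card {p : L × L // p.1 < p.2} ^ 2 := by
  rw [codensity_eq_of_equiv (supIrredEquiv L) (infIrredEquiv L), sq]
  congr 2
  exact Nat.card_congr
    { toFun := fun q =>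
        ⟨(q.1.1.1, q.1.2.1), lt_and_not_arrow_le_coarrow_iff.1 ⟨⟨q.1.1.2, q.1.2.2⟩, q.2⟩⟩
      invFun := fun q =>
        have h := lt_and_not_arrow_le_coarrow_iff.2 q.2
        ⟨(⟨q.1.1, h.1.1⟩, ⟨q.1.2, h.1.2⟩), h.2⟩
      left_inv := fun q => rfl
      right_inv := fun q => rfl }

end TransferSystem

theorem Nat.card_subtype_and_not {β : Type*} [Finite β] (P R : β → Prop) :
    Nat.card {b // P b ∧ ¬ R b} = Nat.card {b // P b} - Nat.card {b // P b ∧ R b} := by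
  classical
  have e : {b // P b} ≃ {b // P b ∧ R b} ⊕ {b // P b ∧ ¬ R b} :=
    (Equiv.sumCompl fun b : {b // P b} => R b).symm.trans
      ((Equiv.subtypeSubtypeEquivSubtypeInter P R).sumCongr
        (Equiv.subtypeSubtypeEquivSubtypeInter P fun b => ¬ R b))
  rw [Nat.card_congr e, Nat.card_sum]
  omega

theorem Nat.card_subtype_eq_pow_of_equiv_pi {β α γ : Type*} [Finite α] (e : β ≃ (α → γ))
    {P : β → Prop} {Q : γ → Prop} (h : ∀ b, P b ↔ ∀ i, Q (e b i)) :
    Nat.card {b // P b} = Nat.card {c // Q c} ^ Nat.card α := by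
  rw [Nat.card_congr ((e.subtypeEquiv h).trans Equiv.subtypePiEquivPi), Nat.card_fun]

def Finset.orderIsoBoolFun (α : Type*) [Fintype α] [DecidableEq α] : Finset α ≃o (α → Bool) where
  toFun s i := decide (i ∈ s)
  invFun f := Finset.univ.filter fun i => f i
  left_inv s := by ext; simp
  right_inv f := by ext; simp
  map_rel_iff' := by simp [Pi.le_def, Bool.le_iff_imp, Finset.subset_iff]

section Boolean

variable {α : Type*} [Fintype α] [DecidableEq α]

theorem card_finset_lt :
    Nat.card {p : Finset α × Finset α // p.1 < p.2} = 3 ^ Fintype.card α - 2 ^ Fintype.card α := by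
  let φ := Finset.orderIsoBoolFun α
  let e : Finset α × Finset α ≃ (α → Bool × Bool) :=
    (φ.toEquiv.prodCongr φ.toEquiv).trans (Equiv.arrowProdEquivProdArrow _ _ _).symm
  rw [Nat.card_congr (Equiv.subtypeEquivRight fun p => lt_iff_le_not_ge), Nat.card_subtype_and_not,
    Nat.card_subtype_eq_pow_of_equiv_pi e (Q := fun w => w.1 ≤ w.2) fun p => φ.le_iff_le.symm,
    Nat.card_subtype_eq_pow_of_equiv_pi e (Q := fun w => w.1 ≤ w.2 ∧ w.2 ≤ w.1) fun p =>
      (and_congr φ.le_iff_le.symm φ.le_iff_le.symm).trans forall_and.symm,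
    Nat.card_eq_fintype_card (α := α), Nat.card_eq_fintype_card, Nat.card_eq_fintype_card]
  rfl

theorem card_finset_square_not_le :
    Nat.card {q : (Finset α × Finset α) × (Finset α × Finset α) //
      (q.2.1 ≤ q.1.1 ∧ q.1.1 ≤ q.1.2 ∧ q.2.1 ≤ q.2.2 ∧ q.2.2 ≤ q.1.2) ∧ ¬ q.2.2 ≤ q.1.1} =
      6 ^ Fintype.card α - 5 ^ Fintype.card α := by
  let φ := Finset.orderIsoBoolFun α
  let e : Finset α × Finset α ≃ (α → Bool × Bool) :=
    (φ.toEquiv.prodCongr φ.toEquiv).trans (Equiv.arrowProdEquivProdArrow _ _ _).symm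
  let e' : (Finset α × Finset α) × (Finset α × Finset α) ≃ (α → (Bool × Bool) × (Bool × Bool)) :=
    (e.prodCongr e).trans (Equiv.arrowProdEquivProdArrow _ _ _).symm
  rw [Nat.card_subtype_and_not,
    Nat.card_subtype_eq_pow_of_equiv_pi e'
      (Q := fun w => w.2.1 ≤ w.1.1 ∧ w.1.1 ≤ w.1.2 ∧ w.2.1 ≤ w.2.2 ∧ w.2.2 ≤ w.1.2) fun q => by
        simp only [← φ.le_iff_le, Pi.le_def, ← forall_and]; rfl,
    Nat.card_subtype_eq_pow_of_equiv_pi e'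
      (Q := fun w => (w.2.1 ≤ w.1.1 ∧ w.1.1 ≤ w.1.2 ∧ w.2.1 ≤ w.2.2 ∧ w.2.2 ≤ w.1.2) ∧
        w.2.2 ≤ w.1.1) fun q => by
        simp only [← φ.le_iff_le, Pi.le_def, ← forall_and]; rfl,
    Nat.card_eq_fintype_card (α := α), Nat.card_eq_fintype_card, Nat.card_eq_fintype_card]
  rfl

end Boolean

theorem codensity_transferSystem_finset (k : ℕ) :
    codensity (TransferSystem (Finset (Fin k))) =
      ((6 : ℚ) ^ k - 5 ^ k) / ((3 : ℚ) ^ k - 2 ^ k) ^ 2 := by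
  rw [TransferSystem.codensity_eq, card_finset_square_not_le, card_finset_lt, Fintype.card_fin,
    Nat.cast_sub (Nat.pow_le_pow_left (by norm_num) k),
    Nat.cast_sub (Nat.pow_le_pow_left (by norm_num) k)]
  push_cast
  rfl

theorem tendsto_six_pow_sub_five_pow_div :
    Filter.Tendsto (fun k : ℕ => ((6 : ℚ) ^ k - 5 ^ k) / ((3 : ℚ) ^ k - 2 ^ k) ^ 2)
      Filter.atTop (nhds 0) := by
  have hpow {r : ℚ} (h₀ : 0 ≤ r) (h₁ : r < 1) :
      Filter.Tendsto (fun k : ℕ => r ^ k) Filter.atTop (nhds 0) :=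
    tendsto_pow_atTop_nhds_zero_of_lt_one h₀ h₁
  have h23 := hpow (r := 2 / 3) (by norm_num) (by norm_num)
  have hlim := (h23.sub (hpow (r := 5 / 9) (by norm_num) (by norm_num))).div
    ((tendsto_const_nhds (x := (1 : ℚ))).sub h23 |>.pow 2) (by norm_num)
  rw [sub_zero, sub_zero, zero_div] at hlim
  refine hlim.congr fun k => ?_
  show ((2 / 3 : ℚ) ^ k - (5 / 9) ^ k) / (1 - (2 / 3) ^ k) ^ 2 = _
  conv_rhs => rw [← div_div_div_cancel_right₀ (pow_ne_zero k (by norm_num : (9 : ℚ) ≠ 0))]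
  congr 1
  · rw [sub_div, ← div_pow, ← div_pow]
    norm_num
  · rw [show (9 : ℚ) ^ k = (3 ^ k) ^ 2 by rw [← pow_mul, mul_comm, pow_mul]; norm_num, ← div_pow,
      sub_div, div_self (pow_ne_zero k three_ne_zero), ← div_pow]

/-- For the Boolean lattice `B_k` of subsets of a `k`-element set,
`ρ(Tr(B_k)) = (6^k - 5^k)/(3^k - 2^k)²`; consequently `ρ(Tr(B_k)) → 0` as `k → ∞`. -/
theorem codensity_boolean :
    (∀ k : ℕ, 1 ≤ k →
      codensity (TransferSystem (Finset (Fin k))) =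
        ((6 : ℚ) ^ k - 5 ^ k) / ((3 : ℚ) ^ k - 2 ^ k) ^ 2) ∧
    Filter.Tendsto (fun k : ℕ => codensity (TransferSystem (Finset (Fin k))))
      Filter.atTop (nhds (0 : ℚ)) :=
  ⟨fun k _ => codensity_transferSystem_finset k, by
    simpa only [codensity_transferSystem_finset] using tendsto_six_pow_sub_five_pow_div⟩
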